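/- arXiv:2306.06588 — 4 statements merged into one kernel-verified Lean document; each statement's English description precedes it below -/
import Mathlib

section
/- If q = 3, gcd(k, q−1) = 1 (i.e., k is odd), and 3 does not divide k, then every matrix in M_n(𝔽_3) can be written as A^k + B^k with A, B ∈ GL_n(𝔽_3). -/
/-!
Every element of a field with more than two elements is a sum of two nonzero elements, so every
matrix is `U + L` with `U` upper and `L` lower triangular, both with nonzero diagonal. Over `𝔽_q`
of characteristic `p` such a triangular `T` has characteristic polynomial `∏ (X - tᵢ)` with
`tᵢ ^ (q - 1) = 1`, which divides `(X ^ (q - 1) - 1) ^ (p ^ n) = X ^ ((q - 1) p ^ n) - 1`; by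
Cayley–Hamilton `T ^ ((q - 1) p ^ n) = 1`. Since `k` is prime to `(q - 1) p ^ n`, raising to the
`k`-th power permutes the cyclic group generated by `T`, so `T` is the `k`-th power of a unit.
-/

open Polynomial

theorem exists_isUnit_pow_eq_of_pow_eq_one {G : Type*} [Monoid G] {x : G} {m k : ℕ} (hm : m ≠ 0)
    (hx : x ^ m = 1) (hk : k.Coprime m) : ∃ y : G, IsUnit y ∧ y ^ k = x := by
  obtain ⟨e, he⟩ :=
    exists_pow_eq_self_of_coprime (Nat.Coprime.coprime_dvd_right (orderOf_dvd_of_pow_eq_one hx) hk)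
  exact ⟨x ^ e, (IsUnit.of_pow_eq_one hx hm).pow e, by rw [← pow_mul, mul_comm, pow_mul, he]⟩

namespace Matrix

variable {n R : Type*} [LinearOrder n]

theorem exists_isUpperTriangular_isLowerTriangular_sub [AddGroup R] (M : Matrix n n R)
    (d : n → R) :
    ∃ U : Matrix n n R, U.IsUpperTriangular ∧ (M - U).IsLowerTriangular ∧ ∀ i, U i i = d i := by
  refine ⟨of fun i j => if i < j then M i j else if i = j then d i else 0, ?_, ?_, ?_⟩
  · intro i j (h : j < i)
    simp [h.not_gt, h.ne']
  · intro i j (h : i < j)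
    simp [h]
  · simp

variable [Fintype n] [CommRing R] (p : ℕ) [Fact p.Prime] [CharP R p] {M : Matrix n n R} {m : ℕ}

theorem IsUpperTriangular.pow_eq_one (hM : M.IsUpperTriangular) (hd : ∀ i, M i i ^ m = 1) :
    M ^ (m * p ^ Fintype.card n) = 1 := by
  have hdvd : M.charpoly ∣ (X ^ m - 1 : R[X]) ^ p ^ Fintype.card n := by
    rw [charpoly_of_isUpperTriangular M hM]
    calc ∏ i, (X - C (M i i)) ∣ ∏ _i : n, (X ^ m - 1 : R[X]) :=
          Finset.prod_dvd_prod_of_dvd _ _ fun i _ => dvd_iff_isRoot.2 (by simp [hd i])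
      _ = (X ^ m - 1) ^ Fintype.card n := by simp
      _ ∣ (X ^ m - 1) ^ p ^ Fintype.card n :=
          pow_dvd_pow _ (Nat.lt_pow_self (Fact.out : p.Prime).one_lt).le
  obtain ⟨r, hr⟩ := hdvd
  have h0 : aeval M ((X ^ m - 1 : R[X]) ^ p ^ Fintype.card n) = 0 := by
    rw [hr, map_mul, aeval_self_charpoly, zero_mul]
  rwa [sub_pow_char_pow, ← pow_mul, one_pow, map_sub, map_pow, aeval_X, map_one,
    sub_eq_zero] at h0

theorem IsLowerTriangular.pow_eq_one (hM : M.IsLowerTriangular) (hd : ∀ i, M i i ^ m = 1) :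
    M ^ (m * p ^ Fintype.card n) = 1 := by
  have hMt : Mᵀ.IsUpperTriangular := fun _ _ h => hM h
  simpa [← transpose_pow] using congrArg transpose (hMt.pow_eq_one p hd)

end Matrix

theorem Matrix.exists_isUnit_pow_add_pow_eq {F n : Type*} [Field F] [Fintype F] (p : ℕ)
    [Fact p.Prime] [CharP F p] (hF : 2 < Fintype.card F) {k : ℕ}
    (hkq : k.Coprime (Fintype.card F - 1)) (hkp : ¬ p ∣ k) [Fintype n] [LinearOrder n]
    (M : Matrix n n F) : ∃ A B : Matrix n n F, IsUnit A ∧ IsUnit B ∧ M = A ^ k + B ^ k := by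
  set m := (Fintype.card F - 1) * p ^ Fintype.card n
  have hm : m ≠ 0 := Nat.mul_ne_zero (by omega) (pow_ne_zero _ (Fact.out : p.Prime).ne_zero)
  have hkm : k.Coprime m :=
    hkq.mul_right (.pow_right _ ((Nat.Prime.coprime_iff_not_dvd Fact.out).2 hkp).symm)
  have h3F : 3 ≤ ENat.card F := by
    rw [ENat.card_eq_coe_fintype_card]
    exact_mod_cast hF
  choose d hd0 hdM using ENat.exists_ne_ne_of_three_le h3F (0 : F)
  obtain ⟨U, hU, hL, hUd⟩ := M.exists_isUpperTriangular_isLowerTriangular_sub fun i => d (M i i)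
  obtain ⟨A, hA, rfl⟩ := exists_isUnit_pow_eq_of_pow_eq_one hm
    (hU.pow_eq_one p fun i => FiniteField.pow_card_sub_one_eq_one _ (hUd i ▸ hd0 _)) hkm
  obtain ⟨B, hB, hBM⟩ := exists_isUnit_pow_eq_of_pow_eq_one hm
    (hL.pow_eq_one p fun i => FiniteField.pow_card_sub_one_eq_one _
      (sub_ne_zero.2 (hUd i ▸ (hdM _).symm))) hkm
  exact ⟨A, B, hA, hB, by rw [hBM, add_sub_cancel]⟩

theorem stmt1_general (F : Type*) [Field F] [Fintype F] (hF : Fintype.card F = 3)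
    (k n : ℕ) (hkq : Nat.gcd k (3 - 1) = 1) (hk3 : ¬ (3 ∣ k)) :
    ∀ M : Matrix (Fin n) (Fin n) F, ∃ A B : Matrix (Fin n) (Fin n) F,
      IsUnit A ∧ IsUnit B ∧ M = A ^ k + B ^ k := by
  have : CharP F 3 := charP_of_card_eq_prime hF
  exact Matrix.exists_isUnit_pow_add_pow_eq 3 (by omega) (hF ▸ hkq) hk3

theorem stmt1 (F : Type*) [Field F] [Fintype F] (hF : Fintype.card F = 3)
    (k n : ℕ) (hk : 1 ≤ k) (hn : 2 ≤ n)
    (hkq : Nat.gcd k (3 - 1) = 1) (hk3 : ¬ (3 ∣ k)) :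
    ∀ M : Matrix (Fin n) (Fin n) F, ∃ A B : Matrix (Fin n) (Fin n) F,
      IsUnit A ∧ IsUnit B ∧ M = A ^ k + B ^ k :=
  stmt1_general F hF k n hkq hk3
end

section
/- If q ≥ 3 and gcd(k, q−1) = 1, then every matrix in M_n(𝔽_q) can be written as A^k + B^k where A and B are split semisimple matrices in M_n(𝔽_q). -/
/-- A matrix over a field is split semisimple (diagonalizable) if it is
similar over the field to a diagonal matrix. -/
def IsSplitSemisimple {n : ℕ} {F : Type*} [Field F]
    (A : Matrix (Fin n) (Fin n) F) : Prop :=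
  ∃ (g : GL (Fin n) F) (d : Fin n → F),
    (↑g : Matrix (Fin n) (Fin n) F) * A * (↑g⁻¹ : Matrix (Fin n) (Fin n) F) =
      Matrix.diagonal d

/-
Over a field with at least three elements every endomorphism f of a finite-dimensional space is a
sum of two diagonalizable ones. By the structure theorem for torsion `F[X]`-modules it suffices to
treat multiplication by `X` on `F[X]/(g)`, i.e. a companion matrix in the basis `e_j = X^j`. Cut
the chain `e_0 ↦ e_1 ↦ ⋯ ↦ e_m` into links of length two, giving alternate links to `B` and to
`A = f - B`: each link becomes a 2×2 triangular block with two distinct eigenvalues, and the only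
remaining freedom, the diagonal entry `γ` of the last column of `A`, is avoided by choosing the
block eigenvalues `a, c` outside `{γ}` (and `c ≠ 0`). When `gcd(k, q - 1) = 1`, `x ↦ x^k` is a
bijection of `𝔽_q`, so every diagonalizable matrix `P⁻¹ D P` is the `k`-th power of the
diagonalizable matrix `P⁻¹ D^(1/k) P`.
-/

open Polynomial Module Matrix

lemma exists_ne_ne_of_two_lt_enatCard {α : Type*} (h : 2 < ENat.card α) (u v : α) :
    ∃ x, x ≠ u ∧ x ≠ v := by
  classical
  obtain ⟨x, hx⟩ := Finset.exists_not_mem_of_card_lt_enatCard (s := {u, v})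
    (lt_of_le_of_lt (by exact_mod_cast Finset.card_le_two) h)
  exact ⟨x, by simpa [not_or] using hx⟩

namespace Module.End

variable {F V W : Type*} [Field F] [AddCommGroup V] [Module F V] [AddCommGroup W] [Module F W]

/-- Encoded as being annihilated by a product of distinct linear factors; in finite dimension this
is equivalent to the existence of an eigenbasis. -/
def IsDiagonalizable (f : End F V) : Prop :=
  ∃ s : Finset F, aeval f (∏ μ ∈ s, (X - C μ)) = 0

lemma ker_aeval_prod_X_sub_C_le_iSup_eigenspace (f : End F V) (s : Finset F) :
    LinearMap.ker (aeval f (∏ μ ∈ s, (X - C μ))) ≤ ⨆ μ, f.eigenspace μ := by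
  classical
  induction s using Finset.induction_on with
  | empty => simp [one_eq_id]
  | insert a s ha ih =>
    have hcop : IsCoprime (X - C a) (∏ μ ∈ s, (X - C μ)) :=
      IsCoprime.prod_right fun μ hμ =>
        isCoprime_X_sub_C_of_isUnit_sub (sub_ne_zero.mpr (ne_of_mem_of_not_mem hμ ha).symm).isUnit
    rw [Finset.prod_insert ha, ← sup_ker_aeval_eq_ker_aeval_mul_of_coprime f hcop]
    refine sup_le (le_trans (fun v hv => ?_) (le_iSup _ a)) ih
    simpa [mem_eigenspace_iff, sub_eq_zero] using hv

lemma IsDiagonalizable.iSup_eigenspace_eq_top {f : End F V} (h : f.IsDiagonalizable) :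
    ⨆ μ, f.eigenspace μ = ⊤ := by
  obtain ⟨s, hs⟩ := h
  exact top_unique (by simpa [hs] using ker_aeval_prod_X_sub_C_le_iSup_eigenspace f s)

lemma isDiagonalizable_of_basis {ι : Type*} (b : Basis ι F V) {f : End F V} (s : Finset F)
    (h : ∀ i, aeval f (∏ μ ∈ s, (X - C μ)) (b i) = 0) : f.IsDiagonalizable :=
  ⟨s, b.ext fun i => by simpa using h i⟩

lemma aeval_prod_X_sub_C_apply_eq_zero_of_apply_eq_smul {f : End F V} {s : Finset F} {x : F}
    (hx : x ∈ s) {v : V} (hv : f v = x • v) : aeval f (∏ μ ∈ s, (X - C μ)) v = 0 := by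
  classical
  rw [← Finset.prod_erase_mul s _ hx, aeval_mul, mul_apply]
  simp [hv]

lemma aeval_prod_X_sub_C_apply_eq_zero_of_apply_sub_smul_eq_smul {f : End F V} {s : Finset F}
    {x y : F} (hx : x ∈ s) (hy : y ∈ s) (hxy : x ≠ y) {v : V}
    (hv : f (f v - y • v) = x • (f v - y • v)) : aeval f (∏ μ ∈ s, (X - C μ)) v = 0 := by
  classical
  rw [← Finset.prod_erase_mul s _ hy, aeval_mul, mul_apply]
  exact aeval_prod_X_sub_C_apply_eq_zero_of_apply_eq_smul (Finset.mem_erase.mpr ⟨hxy, hx⟩)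
    (by simpa using hv)

lemma IsDiagonalizable.conj {f : End F V} (h : f.IsDiagonalizable) (e : V ≃ₗ[F] W) :
    (e.conj f).IsDiagonalizable := by
  obtain ⟨s, hs⟩ := h
  refine ⟨s, ?_⟩
  change aeval (e.conjAlgEquiv F f) _ = 0
  rw [aeval_algEquiv]
  simp [hs]

section Pi

variable {ι : Type*} {M : ι → Type*} [∀ i, AddCommGroup (M i)] [∀ i, Module F (M i)]

lemma aeval_piMap_apply (f : ∀ i, End F (M i)) (p : F[X]) (w : ∀ i, M i) (i : ι) :
    aeval (LinearMap.piMap f) p w i = aeval (f i) p (w i) := by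
  induction p using Polynomial.induction_on' with
  | add p q hp hq => simp [hp, hq]
  | monomial n a =>
    simp only [aeval_monomial, mul_apply, algebraMap_end_apply]
    induction n generalizing w with
    | zero => simp
    | succ n ih => simp_all [pow_succ, mul_apply]

lemma IsDiagonalizable.piMap [Fintype ι] {f : ∀ i, End F (M i)}
    (h : ∀ i, (f i).IsDiagonalizable) : IsDiagonalizable (LinearMap.piMap f) := by
  classical
  choose s hs using h
  refine ⟨Finset.univ.biUnion s, LinearMap.ext fun w => funext fun i => ?_⟩
  obtain ⟨q, hq⟩ := Finset.prod_dvd_prod_of_subset (s i) (Finset.univ.biUnion s) (X - C ·)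
    (Finset.subset_biUnion_of_mem s (Finset.mem_univ i))
  simp [aeval_piMap_apply, hq, hs i]

end Pi

section Cyclic

variable {f : End F V} {x : V} {m : ℕ}

/-- In the basis `e_j = f^j x` this is block diagonal, carrying the links `e_j ↦ e_{j+1}` of `f`
with `m - j` odd as triangular 2×2 blocks with eigenvalues `-c` and `-a` (or `0` at `e_m`);
`f` minus it keeps the other links and the last column of `f`. -/
noncomputable def pairedShift (f : End F V) (x : V) (b : Basis (Fin (m + 1)) F V) (a c : F) :
    End F V :=
  b.constr F fun j => if (m - j) % 2 = 1 then (f ^ ((j : ℕ) + 1)) x - c • (f ^ (j : ℕ)) x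
    else if (j : ℕ) = m then 0 else -(a • (f ^ (j : ℕ)) x)

lemma pairedShift_apply_pow {b : Basis (Fin (m + 1)) F V} (hb : ∀ j, b j = (f ^ (j : ℕ)) x)
    (a c : F) {j : ℕ} (hj : j ≤ m) :
    pairedShift f x b a c ((f ^ j) x) = if (m - j) % 2 = 1 then (f ^ (j + 1)) x - c • (f ^ j) x
      else if j = m then 0 else -(a • (f ^ j) x) :=
  (congrArg _ (hb ⟨j, Nat.lt_succ_of_le hj⟩)).symm.trans (b.constr_basis F _ _)

lemma isDiagonalizable_pairedShift {b : Basis (Fin (m + 1)) F V}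
    (hb : ∀ j, b j = (f ^ (j : ℕ)) x) {a c : F} (hc : c ≠ 0) (hac : a ≠ c) :
    (pairedShift f x b a c).IsDiagonalizable := by
  classical
  set B := pairedShift f x b a c
  have hB {j : ℕ} (hj : j ≤ m) := pairedShift_apply_pow hb a c hj
  refine isDiagonalizable_of_basis b {0, -a, -c} fun i => ?_
  have hi : (i : ℕ) ≤ m := Nat.lt_succ_iff.mp i.isLt
  rw [hb]
  rcases Nat.mod_two_eq_zero_or_one (m - i) with hpar | hpar
  · by_cases him : (i : ℕ) = m
    · exact aeval_prod_X_sub_C_apply_eq_zero_of_apply_eq_smul (x := 0) (by simp)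
        (by rw [hB hi]; simp [him])
    · exact aeval_prod_X_sub_C_apply_eq_zero_of_apply_eq_smul (x := -a) (by simp)
        (by rw [hB hi]; simp [hpar, him])
  · have hsucc : B ((f ^ (i : ℕ)) x) - (-c) • (f ^ (i : ℕ)) x = (f ^ ((i : ℕ) + 1)) x := by
      rw [hB hi]
      simp [hpar]
    by_cases him : (i : ℕ) + 1 = m
    · refine aeval_prod_X_sub_C_apply_eq_zero_of_apply_sub_smul_eq_smul (x := 0) (y := -c)
        (by simp) (by simp) (by simpa using hc) ?_
      rw [hsucc, hB (by omega)]
      simp [him]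
    · refine aeval_prod_X_sub_C_apply_eq_zero_of_apply_sub_smul_eq_smul (x := -a) (y := -c)
        (by simp) (by simp) (by simpa using hac) ?_
      rw [hsucc, hB (by omega)]
      simp [show ¬ (m - (i + 1)) % 2 = 1 by omega, him]

lemma isDiagonalizable_sub_pairedShift {b : Basis (Fin (m + 1)) F V}
    (hb : ∀ j, b j = (f ^ (j : ℕ)) x) {a c : F} (hac : a ≠ c)
    (haγ : a ≠ b.repr (f ((f ^ m) x)) (Fin.last m)) (hcγ : c ≠ b.repr (f ((f ^ m) x)) (Fin.last m)) :
    (f - pairedShift f x b a c).IsDiagonalizable := by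
  classical
  set γ := b.repr (f ((f ^ m) x)) (Fin.last m)
  set A := f - pairedShift f x b a c
  have hB {j : ℕ} (hj : j ≤ m) := pairedShift_apply_pow hb a c hj
  have hA : ∀ j, A ((f ^ j) x) = (f ^ (j + 1)) x - pairedShift f x b a c ((f ^ j) x) :=
    fun j => by simp [A, pow_succ', mul_apply]
  have hlink : ∀ j < m, aeval A (∏ μ ∈ ({a, c} : Finset F), (X - C μ)) ((f ^ j) x) = 0 := by
    intro j hj
    rcases Nat.mod_two_eq_zero_or_one (m - j) with hpar | hpar
    · refine aeval_prod_X_sub_C_apply_eq_zero_of_apply_sub_smul_eq_smul (x := c) (y := a)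
        (by simp) (by simp) hac.symm ?_
      have hnext : A ((f ^ j) x) - a • (f ^ j) x = (f ^ (j + 1)) x := by
        rw [hA, hB hj.le]
        simp [hpar, show j ≠ m by omega]
      rw [hnext, hA, hB hj]
      simp [show (m - (j + 1)) % 2 = 1 by omega]
    · refine aeval_prod_X_sub_C_apply_eq_zero_of_apply_eq_smul (x := c) (by simp) ?_
      rw [hA, hB hj.le]
      simp [hpar]
  have hγ : γ ∉ ({a, c} : Finset F) := by simp [haγ.symm, hcγ.symm]
  refine isDiagonalizable_of_basis b (insert γ {a, c}) fun i => ?_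
  rw [hb, Finset.prod_insert hγ]
  rcases (Nat.lt_succ_iff.mp i.isLt).lt_or_eq with hi | hi
  · rw [aeval_mul, mul_apply, hlink i hi, map_zero]
  · have hAm : A ((f ^ m) x) = ∑ j, b.repr (f ((f ^ m) x)) j • b j := by
      rw [hA, hB le_rfl, b.sum_repr]
      simp [pow_succ', mul_apply]
    rw [mul_comm, aeval_mul, mul_apply, hi]
    simp [hAm, Fin.sum_univ_castSucc, hb, γ, fun j : Fin m => hlink j j.isLt]

theorem exists_isDiagonalizable_add_of_basis_pow (hF : 2 < ENat.card F) {d : ℕ}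
    (b : Basis (Fin d) F V) (hb : ∀ j, b j = (f ^ (j : ℕ)) x) :
    ∃ α β : End F V, α.IsDiagonalizable ∧ β.IsDiagonalizable ∧ f = α + β := by
  obtain _ | m := d
  · exact ⟨0, f, isDiagonalizable_of_basis b ∅ (·.elim0), isDiagonalizable_of_basis b ∅ (·.elim0),
      (zero_add f).symm⟩
  obtain ⟨c, hc0, hcγ⟩ := exists_ne_ne_of_two_lt_enatCard hF 0 (b.repr (f ((f ^ m) x)) (Fin.last m))
  obtain ⟨a, hac, haγ⟩ := exists_ne_ne_of_two_lt_enatCard hF c (b.repr (f ((f ^ m) x)) (Fin.last m))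
  exact ⟨_, _, isDiagonalizable_sub_pairedShift hb hac haγ hcγ,
    isDiagonalizable_pairedShift hb hc0 hac, (sub_add_cancel _ _).symm⟩

end Cyclic

lemma pow_smul_X_apply_mk (g : F[X]) (n : ℕ) (q : F[X]) :
    (DistribSMul.toLinearMap F (F[X] ⧸ F[X] ∙ g) (X : F[X]) ^ n) (Submodule.Quotient.mk q) =
      Submodule.Quotient.mk (X ^ n * q) := by
  induction n with
  | zero => simp
  | succ k ih => rw [pow_succ', mul_apply, ih, pow_succ', mul_assoc]; rfl

theorem exists_isDiagonalizable_add_smul_X (hF : 2 < ENat.card F) {g : F[X]} (hg : g ≠ 0) :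
    ∃ α β : End F (F[X] ⧸ F[X] ∙ g), α.IsDiagonalizable ∧ β.IsDiagonalizable ∧
      DistribSMul.toLinearMap F _ (X : F[X]) = α + β := by
  refine exists_isDiagonalizable_add_of_basis_pow hF (x := Submodule.Quotient.mk 1)
    (AdjoinRoot.powerBasis hg).basis fun j => ?_
  rw [pow_smul_X_apply_mk, mul_one]
  -- `AdjoinRoot g` is by definition the quotient `F[X] ⧸ F[X] ∙ g`
  exact (congrFun (PowerBasis.coe_basis _) j).trans <|
    congrArg (· ^ (j : ℕ)) (AdjoinRoot.powerBasis_gen hg) |>.trans (map_pow _ X j).symm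

theorem exists_isDiagonalizable_add [FiniteDimensional F V] (hF : 2 < ENat.card F)
    (f : End F V) : ∃ α β : End F V, α.IsDiagonalizable ∧ β.IsDiagonalizable ∧ f = α + β := by
  obtain ⟨ι, _, p, hp, e, ⟨L⟩⟩ :=
    Module.equiv_directSum_of_isTorsion (Module.AEval.isTorsion_of_finiteDimensional F V f)
  let T : V ≃ₗ[F] ∀ i, F[X] ⧸ F[X] ∙ p i ^ e i := (AEval'.of f).trans
    ((L.trans (DirectSum.linearEquivFunOnFintype F[X] ι _)).restrictScalars F)
  have hT : ∀ v, T (f v) = (X : F[X]) • T v := fun v => by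
    simp [T, ← AEval'.X_smul_of]
  choose α β hα hβ hX using fun i =>
    exists_isDiagonalizable_add_smul_X hF (pow_ne_zero (e i) (hp i).ne_zero)
  refine ⟨T.symm.conj (LinearMap.piMap α), T.symm.conj (LinearMap.piMap β),
    (IsDiagonalizable.piMap hα).conj _, (IsDiagonalizable.piMap hβ).conj _, ?_⟩
  have hsum : LinearMap.piMap α + LinearMap.piMap β =
      LinearMap.piMap fun i => DistribSMul.toLinearMap F _ (X : F[X]) := by
    ext w i
    simp [hX]
  rw [← map_add, hsum]
  ext v
  rw [LinearEquiv.conj_apply_apply, LinearEquiv.symm_symm, LinearEquiv.eq_symm_apply, hT]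
  rfl

end Module.End

section SplitSemisimple

variable {F : Type*} [Field F] {n : ℕ}

lemma LinearMap.toMatrix_eq_diagonal {V : Type*} [AddCommGroup V] [Module F V] {ι : Type*}
    [Fintype ι] [DecidableEq ι] (b : Basis ι F V) {f : End F V} {μ : ι → F}
    (h : ∀ i, f (b i) = μ i • b i) : LinearMap.toMatrix b b f = diagonal μ := by
  ext i j
  rw [LinearMap.toMatrix_apply, h, map_smul, b.repr_self, diagonal_apply]
  by_cases hij : i = j <;> simp [hij]

lemma isSplitSemisimple_toMatrix'_of_basis {f : End F (Fin n → F)} {ι : Type*} [Fintype ι]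
    [DecidableEq ι] (b : Basis ι F (Fin n → F)) {μ : ι → F} (h : ∀ i, f (b i) = μ i • b i) :
    IsSplitSemisimple (LinearMap.toMatrix' f) := by
  set e := b.indexEquiv (Pi.basisFun F (Fin n))
  set b' := b.reindex e
  refine ⟨⟨b'.toMatrix (Pi.basisFun F (Fin n)), (Pi.basisFun F (Fin n)).toMatrix b',
    b'.toMatrix_mul_toMatrix_flip _, Basis.toMatrix_mul_toMatrix_flip _ _⟩, μ ∘ e.symm, ?_⟩
  have key := basis_toMatrix_mul_linearMap_toMatrix_mul_basis_toMatrix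
    b' (Pi.basisFun F (Fin n)) b' (Pi.basisFun F (Fin n)) f
  rwa [LinearMap.toMatrix_eq_toMatrix',
    LinearMap.toMatrix_eq_diagonal b' (μ := μ ∘ e.symm) fun i => by simp [b', h]] at key

lemma isSplitSemisimple_toMatrix' {f : End F (Fin n → F)} (h : f.IsDiagonalizable) :
    IsSplitSemisimple (LinearMap.toMatrix' f) := by
  classical
  let decomp := DirectSum.isInternal_submodule_of_iSupIndep_of_iSup_eq_top
    f.eigenspaces_iSupIndep h.iSup_eigenspace_eq_top
  let b := decomp.collectedBasis fun μ ↦ finBasis F (f.eigenspace μ)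
  have : Fintype ((μ : F) × Fin (finrank F (f.eigenspace μ))) :=
    FiniteDimensional.fintypeBasisIndex b
  exact isSplitSemisimple_toMatrix'_of_basis b fun i ↦
    End.mem_eigenspace_iff.mp (decomp.collectedBasis_mem _ i)

lemma IsSplitSemisimple.exists_pow_eq {k : ℕ} (hk : Function.Surjective fun x : F => x ^ k)
    {A : Matrix (Fin n) (Fin n) F} (hA : IsSplitSemisimple A) :
    ∃ B, IsSplitSemisimple B ∧ B ^ k = A := by
  obtain ⟨g, d, hg⟩ := hA
  choose r hr using fun i => hk (d i)
  refine ⟨(↑g⁻¹ : Matrix (Fin n) (Fin n) F) * diagonal r * (↑g : Matrix (Fin n) (Fin n) F),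
    ⟨g, r, ?_⟩, ?_⟩
  · simp [← mul_assoc]
  · rw [Units.conj_pow', diagonal_pow, show r ^ k = d from funext hr, ← hg]
    simp [← mul_assoc]

lemma pow_surjective_of_coprime [Fintype F] {k : ℕ} (hk : k ≠ 0)
    (hkq : Nat.Coprime k (Fintype.card F - 1)) : Function.Surjective fun x : F => x ^ k := by
  intro x
  rcases eq_or_ne x 0 with rfl | hx
  · exact ⟨0, zero_pow hk⟩
  have hcop : (Nat.card Fˣ).Coprime k := by
    classical
    rwa [Nat.card_eq_fintype_card, Fintype.card_units, Nat.coprime_comm]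
  obtain ⟨u, hu⟩ := (powCoprime hcop).surjective (Units.mk0 x hx)
  exact ⟨u, by simpa using congrArg Units.val hu⟩

end SplitSemisimple

theorem stmt2_general (F : Type*) [Field F] [Fintype F] (hF : 3 ≤ Fintype.card F)
    (k n : ℕ) (hk : 1 ≤ k)
    (hkq : Nat.gcd k (Fintype.card F - 1) = 1) :
    ∀ M : Matrix (Fin n) (Fin n) F, ∃ A B : Matrix (Fin n) (Fin n) F,
      IsSplitSemisimple A ∧ IsSplitSemisimple B ∧ M = A ^ k + B ^ k := by
  intro M
  have hF' : 2 < ENat.card F := by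
    rw [ENat.card_eq_coe_fintype_card]
    exact_mod_cast hF
  have hpow := pow_surjective_of_coprime (F := F) (Nat.one_le_iff_ne_zero.mp hk) hkq
  obtain ⟨α, β, hα, hβ, hM⟩ := End.exists_isDiagonalizable_add hF' (toLin' M)
  obtain ⟨A, hA, hAk⟩ := (isSplitSemisimple_toMatrix' hα).exists_pow_eq hpow
  obtain ⟨B, hB, hBk⟩ := (isSplitSemisimple_toMatrix' hβ).exists_pow_eq hpow
  refine ⟨A, B, hA, hB, ?_⟩
  rw [hAk, hBk, ← map_add, ← hM, LinearMap.toMatrix'_toLin']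

theorem stmt2 (F : Type*) [Field F] [Fintype F] (hF : 3 ≤ Fintype.card F)
    (k n : ℕ) (hk : 1 ≤ k) (hn : 2 ≤ n)
    (hkq : Nat.gcd k (Fintype.card F - 1) = 1) :
    ∀ M : Matrix (Fin n) (Fin n) F, ∃ A B : Matrix (Fin n) (Fin n) F,
      IsSplitSemisimple A ∧ IsSplitSemisimple B ∧ M = A ^ k + B ^ k :=
  stmt2_general F hF k n hk hkq
end

section
/- Let k ≥ 2. If 6 does not divide k, then every matrix in M_2(𝔽_2) can be written as A^k + B^k with A, B ∈ M_2(𝔽_2). If 6 divides k, then a matrix M ∈ M_2(𝔽_2) can be written as A^k + B^k with A, B ∈ M_2(𝔽_2) if and only if M^2 + M + I_2 ≠ 0 (the two excluded matrices are exactly the invertible matrices of multiplicative order 3). -/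
set_option maxHeartbeats 1000000

private lemma pow8_eq_pow2 : ∀ A : Matrix (Fin 2) (Fin 2) (ZMod 2), A ^ 8 = A ^ 2 := by
  decide

private lemma pow_period (A : Matrix (Fin 2) (Fin 2) (ZMod 2)) :
    ∀ m : ℕ, A ^ (2 + m) = A ^ (2 + m % 6) := by
  intro m
  induction m using Nat.strong_induction_on with
  | _ m ih =>
    by_cases h : m < 6
    · rw [Nat.mod_eq_of_lt h]
    · have h6 : 6 ≤ m := by omega
      have h1 : 2 + m = 8 + (m - 6) := by omega
      have h2 : A ^ (2 + m) = A ^ (2 + (m - 6)) := by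
        rw [h1, pow_add, pow8_eq_pow2, ← pow_add]
      rw [h2, ih (m - 6) (by omega)]
      congr 2
      omega

theorem stmt18 (k : ℕ) (hk : 2 ≤ k) :
    (¬ (6 ∣ k) →
      ∀ M : Matrix (Fin 2) (Fin 2) (ZMod 2), ∃ A B : Matrix (Fin 2) (Fin 2) (ZMod 2),
        M = A ^ k + B ^ k) ∧
    (6 ∣ k →
      ∀ M : Matrix (Fin 2) (Fin 2) (ZMod 2),
        (∃ A B : Matrix (Fin 2) (Fin 2) (ZMod 2), M = A ^ k + B ^ k) ↔
          M ^ 2 + M + 1 ≠ 0) := by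
  obtain ⟨m, rfl⟩ : ∃ m, k = 2 + m := ⟨k - 2, by omega⟩
  have hpow : ∀ A : Matrix (Fin 2) (Fin 2) (ZMod 2), A ^ (2 + m) = A ^ (2 + m % 6) :=
    fun A => pow_period A m
  have hr : m % 6 < 6 := Nat.mod_lt _ (by norm_num)
  constructor
  · intro h6 M
    simp only [hpow]
    have h4 : m % 6 = 0 ∨ m % 6 = 1 ∨ m % 6 = 2 ∨ m % 6 = 3 ∨ m % 6 = 5 := by
      by_contra hc
      push_neg at hc
      exact h6 (by omega)
    revert M
    rcases h4 with h|h|h|h|h <;> rw [h] <;> decide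
  · intro h6 M
    have h4 : m % 6 = 4 := by omega
    simp only [hpow, h4]
    revert M
    decide
end

section
/- Suppose p does not divide k. Let A ∈ M_n(𝔽_q) be an upper triangular matrix such that at most one diagonal entry of A equals 0 and every nonzero diagonal entry of A is a k-th power in 𝔽_q. Then A = B^k for some B ∈ M_n(𝔽_q). -/
section Aux

variable {R : Type*} [CommRing R] {n : ℕ}

private lemma ut_mul {B C : Matrix (Fin n) (Fin n) R}
    (hB : ∀ i j, j < i → B i j = 0) (hC : ∀ i j, j < i → C i j = 0) :
    ∀ i j, j < i → (B * C) i j = 0 := by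
  intro i j h
  rw [Matrix.mul_apply]
  apply Finset.sum_eq_zero
  intro s _
  rcases lt_or_ge s i with hs | hs
  · rw [hB i s hs, zero_mul]
  · rw [hC s j (h.trans_le hs), mul_zero]

private lemma ut_pow {B : Matrix (Fin n) (Fin n) R}
    (hB : ∀ i j, j < i → B i j = 0) (a : ℕ) :
    ∀ i j, j < i → (B ^ a) i j = 0 := by
  induction a with
  | zero =>
    intro i j h
    rw [pow_zero]
    exact Matrix.one_apply_ne h.ne'
  | succ a ih =>
    rw [pow_succ]
    exact ut_mul ih hB

private lemma diag_mul {B C : Matrix (Fin n) (Fin n) R}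
    (hB : ∀ i j, j < i → B i j = 0) (hC : ∀ i j, j < i → C i j = 0) (i : Fin n) :
    (B * C) i i = B i i * C i i := by
  rw [Matrix.mul_apply, Finset.sum_eq_single i]
  · intro s _ hs
    rcases lt_or_gt_of_ne hs with h1 | h1
    · rw [hB i s h1, zero_mul]
    · rw [hC s i h1, mul_zero]
  · intro h; exact absurd (Finset.mem_univ i) h

private lemma diag_pow {B : Matrix (Fin n) (Fin n) R}
    (hB : ∀ i j, j < i → B i j = 0) (a : ℕ) (i : Fin n) :
    (B ^ a) i i = (B i i) ^ a := by
  induction a with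
  | zero => rw [pow_zero, pow_zero]; exact Matrix.one_apply_eq i
  | succ a ih =>
    rw [pow_succ, pow_succ, diag_mul (ut_pow hB a) hB, ih]

private lemma pow_sub_pow' (B C : Matrix (Fin n) (Fin n) R) (k : ℕ) :
    B ^ k - C ^ k = ∑ a ∈ Finset.range k, B ^ a * (B - C) * C ^ (k - 1 - a) := by
  induction k with
  | zero => simp
  | succ k ih =>
    have key : B ^ (k + 1) - C ^ (k + 1)
        = B ^ k * (B - C) * C ^ (k + 1 - 1 - k) + (B ^ k - C ^ k) * C := by
      simp only [Nat.add_sub_cancel, Nat.sub_self, pow_zero, mul_one, pow_succ]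
      noncomm_ring
    rw [key, ih, Finset.sum_mul, Finset.sum_range_succ]
    rw [add_comm]
    congr 1
    apply Finset.sum_congr rfl
    intro a ha
    rw [Finset.mem_range] at ha
    have h1 : k + 1 - 1 - a = (k - 1 - a) + 1 := by omega
    rw [h1, pow_succ, ← mul_assoc]

end Aux

theorem stmt19 (p : ℕ) (hp : p.Prime) (F : Type*) [Field F] [Fintype F] [CharP F p]
    (k n : ℕ) (hk : 1 ≤ k) (hn : 1 ≤ n) (hpk : ¬ p ∣ k)
    (A : Matrix (Fin n) (Fin n) F)
    (htri : ∀ i j : Fin n, j < i → A i j = 0)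
    (hzero : ∀ i j : Fin n, A i i = 0 → A j j = 0 → i = j)
    (hpow : ∀ i : Fin n, A i i ≠ 0 → ∃ b : F, A i i = b ^ k) :
    ∃ B : Matrix (Fin n) (Fin n) F, A = B ^ k := by
  classical
  have hk0 : k ≠ 0 := by omega
  have hkF : (k : F) ≠ 0 := fun h => hpk ((CharP.cast_eq_zero_iff F p k).mp h)
  -- choose consistent k-th roots of the diagonal entries
  let f : F → F := fun x => if h : ∃ c : F, x = c ^ k then h.choose else 0
  let b : Fin n → F := fun i => f (A i i)
  have hroot : ∀ i, b i ^ k = A i i := by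
    intro i
    have hex : ∃ c : F, A i i = c ^ k := by
      by_cases h : A i i = 0
      · exact ⟨0, by rw [h, zero_pow hk0]⟩
      · exact hpow i h
    show f (A i i) ^ k = A i i
    simp only [f, dif_pos hex]
    exact hex.choose_spec.symm
  have hbz : ∀ i, b i = 0 → A i i = 0 := by
    intro i h
    rw [← hroot i, h, zero_pow hk0]
  have hbeq : ∀ i j, A i i = A j j → b i = b j := by
    intro i j h
    show f (A i i) = f (A j j)
    rw [h]
  -- key coefficients are nonzero
  have hc : ∀ i j : Fin n, i < j →
      (∑ a ∈ Finset.range k, b i ^ a * b j ^ (k - 1 - a)) ≠ 0 := by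
    intro i j hij hC0
    by_cases he : b i = b j
    · have hsum : (∑ a ∈ Finset.range k, b i ^ a * b j ^ (k - 1 - a))
          = (k : F) * b i ^ (k - 1) := by
        rw [← he]
        rw [Finset.sum_congr rfl (fun a ha => ?_), Finset.sum_const,
          Finset.card_range, nsmul_eq_mul]
        rw [Finset.mem_range] at ha
        rw [← pow_add]
        congr 1
        omega
      rw [hsum] at hC0
      rcases mul_eq_zero.mp hC0 with h | h
      · exact hkF h
      · have hbi : b i = 0 := by
          rcases Nat.eq_zero_or_pos (k - 1) with h1 | h1
          · exfalso
            rw [h1, pow_zero] at h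
            exact one_ne_zero h
          · exact pow_eq_zero_iff (by omega) |>.mp h
        have h1 : A i i = 0 := hbz i hbi
        have h2 : A j j = 0 := hbz j (he ▸ hbi)
        exact hij.ne (hzero i j h1 h2)
    · have hgs := geom_sum₂_mul (b i) (b j) k
      rw [hC0, zero_mul] at hgs
      have : A i i = A j j := by
        rw [← hroot i, ← hroot j]
        exact sub_eq_zero.mp hgs.symm
      exact he (hbeq i j this)
  -- injectivity of the k-th power map on triangular matrices with diagonal b
  have hinj : ∀ B C : Matrix (Fin n) (Fin n) F,
      (∀ i j, j < i → B i j = 0) → (∀ i, B i i = b i) →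
      (∀ i j, j < i → C i j = 0) → (∀ i, C i i = b i) →
      B ^ k = C ^ k → B = C := by
    intro B C hBt hBd hCt hCd hBC
    by_contra hne
    set E := B - C with hE
    have hEt : ∀ s t : Fin n, E s t ≠ 0 → s < t := by
      intro s t h
      by_contra hst
      push_neg at hst
      apply h
      rcases eq_or_lt_of_le hst with h1 | h1
      · show B s t - C s t = 0
        rw [← h1, hBd, hCd, sub_self]
      · show B s t - C s t = 0
        rw [hBt s t h1, hCt s t h1, sub_self]
    have hEne : ∃ q : Fin n × Fin n, E q.1 q.2 ≠ 0 := by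
      by_contra h
      push_neg at h
      apply hne
      ext s t
      have := h (s, t)
      simpa [hE, sub_eq_zero] using this
    obtain ⟨q0, hq0⟩ := hEne
    obtain ⟨q, hq, hmin⟩ := Finset.exists_min_image
      (Finset.univ.filter fun q : Fin n × Fin n => E q.1 q.2 ≠ 0)
      (fun q => (q.2 : ℕ) - (q.1 : ℕ))
      ⟨q0, by simp [hq0]⟩
    obtain ⟨i, j⟩ := q
    rw [Finset.mem_filter] at hq
    have hqE : E i j ≠ 0 := hq.2
    have hij : i < j := hEt _ _ hqE
    have hmin' : ∀ s t : Fin n, E s t ≠ 0 → (j : ℕ) - (i : ℕ) ≤ (t : ℕ) - (s : ℕ) := by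
      intro s t h
      exact hmin (s, t) (by simp [h])
    have h0 : (B ^ k - C ^ k) i j = 0 := by
      rw [hBC, sub_self, Matrix.zero_apply]
    rw [pow_sub_pow', Matrix.sum_apply] at h0
    have hterm : ∀ a ∈ Finset.range k,
        (B ^ a * (B - C) * C ^ (k - 1 - a)) i j
          = b i ^ a * b j ^ (k - 1 - a) * E i j := by
      intro a _
      rw [mul_assoc, Matrix.mul_apply]
      rw [Finset.sum_eq_single i]
      · rw [Matrix.mul_apply, Finset.sum_eq_single j]
        · rw [diag_pow hBt, diag_pow hCt, hBd, hCd, ← hE]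
          ring
        · intro t _ ht
          rcases lt_or_gt_of_ne ht with h1 | h1
          · have hEit : E i t = 0 := by
              by_contra h2
              have := hmin' i t h2
              have := hEt i t h2
              have hlt : (i : ℕ) < (t : ℕ) := this
              have hlt2 : (t : ℕ) < (j : ℕ) := h1
              omega
            rw [← hE, hEit, zero_mul]
          · rw [ut_pow hCt _ t j h1, mul_zero]
        · intro h; exact absurd (Finset.mem_univ j) h
      · intro s _ hs
        rcases lt_or_gt_of_ne hs with h1 | h1
        · rw [ut_pow hBt _ i s h1, zero_mul]
        · have : ((B - C) * C ^ (k - 1 - a)) s j = 0 := by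
            rw [Matrix.mul_apply]
            apply Finset.sum_eq_zero
            intro t _
            rcases lt_or_ge j t with h2 | h2
            · rw [ut_pow hCt _ t j h2, mul_zero]
            · have hEst : E s t = 0 := by
                by_contra h3
                have := hmin' s t h3
                have hst : (s : ℕ) < (t : ℕ) := hEt s t h3
                have his : (i : ℕ) < (s : ℕ) := h1
                have htj : (t : ℕ) ≤ (j : ℕ) := h2
                have hijn : (i : ℕ) < (j : ℕ) := hij
                omega
              rw [← hE, hEst, zero_mul]
          rw [this, mul_zero]
      · intro h; exact absurd (Finset.mem_univ i) h
    rw [Finset.sum_congr rfl hterm, ← Finset.sum_mul] at h0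
    rcases mul_eq_zero.mp h0 with h | h
    · exact hc i j hij h
    · exact hqE h
  -- build matrices from their strictly upper entries
  let Q := {q : Fin n × Fin n // q.1 < q.2}
  let toM : (Fin n → F) → (Q → F) → Matrix (Fin n) (Fin n) F := fun c g =>
    Matrix.of fun i j => if h : i < j then g ⟨(i, j), h⟩ else if i = j then c i else 0
  have toM_tri : ∀ c g, ∀ i j : Fin n, j < i → toM c g i j = 0 := by
    intro c g i j h
    show (if h' : i < j then g ⟨(i, j), h'⟩ else if i = j then c i else 0) = 0
    rw [dif_neg (lt_asymm h), if_neg h.ne']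
  have toM_diag : ∀ c g, ∀ i : Fin n, toM c g i i = c i := by
    intro c g i
    show (if h' : i < i then g ⟨(i, i), h'⟩ else if i = i then c i else 0) = c i
    rw [dif_neg (lt_irrefl i), if_pos rfl]
  have toM_upper : ∀ c g, ∀ i j : Fin n, ∀ h : i < j, toM c g i j = g ⟨(i, j), h⟩ := by
    intro c g i j h
    show (if h' : i < j then g ⟨(i, j), h'⟩ else if i = j then c i else 0) = g ⟨(i, j), h⟩
    rw [dif_pos h]
  have ext3 : ∀ M N : Matrix (Fin n) (Fin n) F,
      (∀ i j, j < i → M i j = 0) → (∀ i j, j < i → N i j = 0) →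
      (∀ i, M i i = N i i) → (∀ i j : Fin n, i < j → M i j = N i j) → M = N := by
    intro M N hM hN hd hu
    ext i j
    rcases lt_trichotomy i j with h | h | h
    · exact hu i j h
    · rw [h]; exact hd j
    · rw [hM i j h, hN i j h]
  -- the self-map on strictly upper parts
  let Ψ : (Q → F) → (Q → F) := fun g q => ((toM b g) ^ k) q.1.1 q.1.2
  have hΨinj : Function.Injective Ψ := by
    intro g g' h
    have hpow_eq : (toM b g) ^ k = (toM b g') ^ k := by
      apply ext3
      · exact ut_pow (toM_tri b g) k
      · exact ut_pow (toM_tri b g') k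
      · intro i
        rw [diag_pow (toM_tri b g), diag_pow (toM_tri b g'), toM_diag, toM_diag]
      · intro i j hij
        exact congrFun h ⟨(i, j), hij⟩
    have hMeq : toM b g = toM b g' :=
      hinj _ _ (toM_tri b g) (toM_diag b g) (toM_tri b g') (toM_diag b g') hpow_eq
    funext q
    obtain ⟨⟨i, j⟩, hij⟩ := q
    rw [← toM_upper b g i j hij, ← toM_upper b g' i j hij, hMeq]
  have hΨsurj : Function.Surjective Ψ := Finite.injective_iff_surjective.mp hΨinj
  obtain ⟨g, hg⟩ := hΨsurj (fun q => A q.1.1 q.1.2)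
  refine ⟨toM b g, ?_⟩
  apply ext3
  · exact htri
  · exact ut_pow (toM_tri b g) k
  · intro i
    rw [diag_pow (toM_tri b g), toM_diag, hroot]
  · intro i j hij
    exact (congrFun hg ⟨(i, j), hij⟩).symm
end
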